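/- arXiv:1508.02943 — 3 statements merged into one kernel-verified Lean document; each statement's English description precedes it below -/
import Mathlib

section
/- Let (H, Δ) be a Hopf algebra with center Z. Define L = {y ∈ H : Δ(y) ∈ H ⊗ Z}. Then L is a subalgebra of H contained in Z, and moreover Δ(L) ⊆ Z ⊗ Z. -/
/-!
If `Δ y ∈ H ⊗ Z`, applying `ε ⊗ id` gives `y ∈ Z`. Then `Δ y` commutes with `Δ(H)`, because `Δ`
is multiplicative, and with `1 ⊗ H`, because its right tensor legs are central. The identity
`x ⊗ 1 = ∑ Δ(x₁) (1 ⊗ S x₂)` shows that `Δ(H)` and `1 ⊗ H` generate `H ⊗ H`, so `Δ y` is central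
in `H ⊗ H`, and over a field the center of `H ⊗ H` lies in `Z ⊗ Z`.
-/

open TensorProduct Coalgebra HopfAlgebra

namespace Coalgebra

variable {R C : Type*} [CommSemiring R] [AddCommMonoid C] [Module R C] [Coalgebra R C]

lemma mem_of_comul_mem_range_lTensor (N : Submodule R C) {y : C}
    (h : comul y ∈ LinearMap.range (N.subtype.lTensor C)) : y ∈ N := by
  obtain ⟨u, hu⟩ := h
  have hN : ∀ u : C ⊗[R] N,
      TensorProduct.lid R C (counit.rTensor C (N.subtype.lTensor C u)) ∈ N := by
    intro u
    induction u using TensorProduct.induction_on with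
    | zero => simp
    | tmul c n => simpa using N.smul_mem _ n.2
    | add u v hu hv => simpa only [map_add] using N.add_mem hu hv
  simpa [hu] using hN u

end Coalgebra

namespace Subalgebra

variable {k A B : Type*} [Field k] [Ring A] [Ring B] [Algebra k A] [Algebra k B]

lemma center_tensorProduct_le :
    center k (A ⊗[k] B) ≤ (Algebra.TensorProduct.map (center k A).val (center k B).val).range := by
  intro c hc
  have hr : c ∈ centralizer k (Algebra.TensorProduct.includeRight : B →ₐ[k] A ⊗[k] B).range :=
    center_le_centralizer _ _ hc
  rw [centralizer_range_includeRight_eq_center_tensorProduct] at hr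
  obtain ⟨u, rfl⟩ := hr
  have hinj : Function.Injective (Algebra.TensorProduct.map (AlgHom.id k A) (center k B).val) :=
    Module.Flat.lTensor_preserves_injective_linearMap _ Subtype.val_injective
  have hu : u ∈ centralizer k
      (Algebra.TensorProduct.includeLeft : A →ₐ[k] A ⊗[k] center k B).range := by
    rintro _ ⟨x, rfl⟩
    apply hinj
    simpa [map_mul] using (Subalgebra.mem_center_iff.mp hc (x ⊗ₜ 1))
  rw [centralizer_coe_range_includeLeft_eq_center_tensorProduct] at hu
  obtain ⟨v, rfl⟩ := hu
  refine ⟨v, ?_⟩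
  change _ = ((Algebra.TensorProduct.map (AlgHom.id k A) (center k B).val).comp
    (Algebra.TensorProduct.map (center k A).val (AlgHom.id k _))) v
  rw [← Algebra.TensorProduct.map_comp]
  rfl

end Subalgebra

namespace HopfAlgebra

variable {R A ι : Type*} [CommSemiring R] [Semiring A] [HopfAlgebra R A]

lemma sum_comul_mul_one_tmul_antipode {a : A} (repr : Repr R a ι) :
    ∑ i ∈ repr.index, comul (R := R) (repr.left i) * (1 ⊗ₜ antipode R (repr.right i)) =
      a ⊗ₜ[R] (1 : A) := by
  -- `T ((u ⊗ v) ⊗ w) = (u ⊗ v) (1 ⊗ S w)`; coassociativity turns it into `id ⊗ (μ ∘ (id ⊗ S))`.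
  let T : (A ⊗[R] A) ⊗[R] A →ₗ[R] A ⊗[R] A := LinearMap.mul' R (A ⊗[R] A) ∘ₗ
    LinearMap.lTensor (A ⊗[R] A)
      (Algebra.TensorProduct.includeRight.toLinearMap ∘ₗ antipode R)
  have hT : T ∘ₗ (TensorProduct.assoc R A A A).symm.toLinearMap =
      LinearMap.lTensor A (LinearMap.mul' R A ∘ₗ LinearMap.lTensor A (antipode R)) := by
    ext; simp [T]
  calc ∑ i ∈ repr.index, comul (R := R) (repr.left i) * (1 ⊗ₜ antipode R (repr.right i))
      = T (LinearMap.rTensor A comul (comul a)) := by simp [← repr.eq, T, map_sum]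
    _ = LinearMap.lTensor A (Algebra.linearMap R A ∘ₗ counit) (comul a) := by
        rw [← coassoc_symm_apply, ← LinearEquiv.coe_toLinearMap, ← LinearMap.comp_apply (f := T),
          hT, ← LinearMap.lTensor_comp_apply, LinearMap.comp_assoc, mul_antipode_lTensor_comul]
    _ = a ⊗ₜ 1 := by simp [LinearMap.lTensor_comp_apply]

lemma comulAlgHom_range_sup_includeRight_range :
    (Bialgebra.comulAlgHom R A).range ⊔
      (Algebra.TensorProduct.includeRight : A →ₐ[R] A ⊗[R] A).range = ⊤ := by
  refine Algebra.eq_top_iff.mpr fun c => ?_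
  induction c using TensorProduct.induction_on with
  | zero => exact zero_mem _
  | tmul x b =>
    have hx : x ⊗ₜ[R] (1 : A) ∈ (Bialgebra.comulAlgHom R A).range ⊔
        (Algebra.TensorProduct.includeRight : A →ₐ[R] A ⊗[R] A).range := by
      rw [← sum_comul_mul_one_tmul_antipode (ℛ R x)]
      exact Subalgebra.sum_mem _ fun i _ => Subalgebra.mul_mem _
        (Algebra.mem_sup_left ⟨_, rfl⟩) (Algebra.mem_sup_right ⟨_, rfl⟩)
    rw [show x ⊗ₜ[R] b = x ⊗ₜ[R] 1 * 1 ⊗ₜ[R] b by simp [Algebra.TensorProduct.tmul_mul_tmul]]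
    exact Subalgebra.mul_mem _ hx (Algebra.mem_sup_right ⟨b, rfl⟩)
  | add c d hc hd => exact add_mem hc hd

lemma comul_mem_center_of_mem_centralizer_includeRight {y : A} (hy : y ∈ Subalgebra.center R A)
    (h : comul (R := R) y ∈ Subalgebra.centralizer R
      (Algebra.TensorProduct.includeRight : A →ₐ[R] A ⊗[R] A).range) :
    comul (R := R) y ∈ Subalgebra.center R (A ⊗[R] A) := by
  have hcomul : comul (R := R) y ∈ Subalgebra.centralizer R (Bialgebra.comulAlgHom R A).range := by
    rintro _ ⟨a, rfl⟩
    show comul a * comul y = comul y * comul a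
    rw [← Bialgebra.comul_mul, ← Bialgebra.comul_mul, Subalgebra.mem_center_iff.mp hy a]
  rw [← Subalgebra.centralizer_univ, ← Algebra.coe_top (R := R),
    ← comulAlgHom_range_sup_includeRight_range, Subalgebra.centralizer_coe_sup]
  exact ⟨hcomul, h⟩

end HopfAlgebra

/-- For a Hopf algebra `H` with center `Z`, the set `L = {y : Δ(y) ∈ H ⊗ Z}` is a subalgebra
of `H` contained in `Z`, and moreover `Δ(L) ⊆ Z ⊗ Z`. -/
theorem stmt3 (k H : Type*) [Field k] [Ring H] [HopfAlgebra k H] :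
    ∃ L : Subalgebra k H,
      (↑L = {y : H | Coalgebra.comul (R := k) y ∈
          LinearMap.range (TensorProduct.map (LinearMap.id : H →ₗ[k] H)
            (Subalgebra.center k H).val.toLinearMap)}) ∧
      L ≤ Subalgebra.center k H ∧
      ∀ y ∈ L, Coalgebra.comul (R := k) y ∈
        LinearMap.range (TensorProduct.map (Subalgebra.center k H).val.toLinearMap
          (Subalgebra.center k H).val.toLinearMap) := by
  let L := (Algebra.TensorProduct.map (AlgHom.id k H) (Subalgebra.center k H).val).range.comap
    (Bialgebra.comulAlgHom k H)
  have hL : L ≤ Subalgebra.center k H := fun y hy =>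
    mem_of_comul_mem_range_lTensor (Subalgebra.toSubmodule (Subalgebra.center k H)) hy
  refine ⟨L, rfl, hL, fun y hy => Subalgebra.center_tensorProduct_le ?_⟩
  refine comul_mem_center_of_mem_centralizer_includeRight (hL hy) ?_
  rw [Subalgebra.centralizer_range_includeRight_eq_center_tensorProduct]
  exact hy
end

section
/- Let (H, Δ) be a Hopf algebra and Z its center. Then L = {y ∈ H : Δ(y) ∈ H ⊗ Z} is the largest left coideal subalgebra of H contained in Z; that is, L is a left coideal subalgebra contained in Z, and every left coideal subalgebra of H contained in Z is contained in L. -/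
open TensorProduct

section Aux

variable {k H M : Type*} [Field k] [Ring H] [HopfAlgebra k H]
  [AddCommGroup M] [Module k M]

private lemma aux_mem_range_iff (W : Submodule k H) (x : H ⊗[k] H) :
    x ∈ LinearMap.range (TensorProduct.map (LinearMap.id : H →ₗ[k] H) W.subtype) ↔
    (W.mkQ.lTensor H) x = 0 := by
  have h : LinearMap.range (W.subtype.lTensor H) = LinearMap.ker (W.mkQ.lTensor H) :=
    (LinearMap.exact_iff.mp (Module.Flat.lTensor_exact H (LinearMap.exact_subtype_mkQ W))).symm
  show x ∈ LinearMap.range (W.subtype.lTensor H) ↔ _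
  rw [h, LinearMap.mem_ker]

private lemma aux_key (g : H →ₗ[k] M) (y : H)
    (hy : (g.lTensor H) (Coalgebra.comul (R := k) y) = 0) :
    (((g.lTensor H) ∘ₗ Coalgebra.comul).lTensor H) (Coalgebra.comul (R := k) y) = 0 := by
  rw [LinearMap.lTensor_comp, LinearMap.comp_apply]
  have h1 : (Coalgebra.comul (R := k)).lTensor H (Coalgebra.comul y)
      = TensorProduct.assoc k H H H ((Coalgebra.comul (R := k)).rTensor H (Coalgebra.comul y)) :=
    (Coalgebra.coassoc_apply y).symm
  rw [h1]
  have h2 : (LinearMap.lTensor H (LinearMap.lTensor H g)) ∘ₗ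
        (TensorProduct.assoc k H H H).toLinearMap
      = (TensorProduct.assoc k H H M).toLinearMap ∘ₗ (LinearMap.lTensor (H ⊗[k] H) g) := by
    apply TensorProduct.ext_threefold; intro a b c; simp
  have h2' := LinearMap.congr_fun h2 ((Coalgebra.comul (R := k)).rTensor H (Coalgebra.comul y))
  simp only [LinearMap.comp_apply, LinearEquiv.coe_coe] at h2' ⊢
  rw [h2']
  have h3 : (LinearMap.lTensor (H ⊗[k] H) g) ∘ₗ ((Coalgebra.comul (R := k)).rTensor H)
      = ((Coalgebra.comul (R := k)).rTensor M) ∘ₗ (g.lTensor H) := by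
    rw [LinearMap.lTensor_comp_rTensor, LinearMap.rTensor_comp_lTensor]
  have h3' := LinearMap.congr_fun h3 (Coalgebra.comul (R := k) y)
  simp only [LinearMap.comp_apply] at h3'
  rw [h3', hy, map_zero, map_zero]

end Aux

/-- For a Hopf algebra `H` with center `Z`, the set `L = {y : Δ(y) ∈ H ⊗ Z}` is the largest
left coideal subalgebra of `H` contained in `Z`: it is a left coideal subalgebra contained in
`Z`, and every left coideal subalgebra of `H` contained in `Z` is contained in `L`. -/
theorem stmt4 (k H : Type*) [Field k] [Ring H] [HopfAlgebra k H] :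
    ∃ L : Subalgebra k H,
      (↑L = {y : H | Coalgebra.comul (R := k) y ∈
          LinearMap.range (TensorProduct.map (LinearMap.id : H →ₗ[k] H)
            (Subalgebra.center k H).val.toLinearMap)}) ∧
      (∀ x ∈ L, Coalgebra.comul (R := k) x ∈
        LinearMap.range (TensorProduct.map (LinearMap.id : H →ₗ[k] H) L.val.toLinearMap)) ∧
      L ≤ Subalgebra.center k H ∧
      ∀ N : Subalgebra k H,
        (∀ x ∈ N, Coalgebra.comul (R := k) x ∈
          LinearMap.range (TensorProduct.map (LinearMap.id : H →ₗ[k] H) N.val.toLinearMap)) →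
        N ≤ Subalgebra.center k H → N ≤ L := by
  classical
  set Z : Subalgebra k H := Subalgebra.center k H with hZ
  set Z' : Submodule k H := Subalgebra.toSubmodule Z with hZ'
  -- the range subalgebra `H ⊗ Z ⊆ H ⊗ H`
  set I : Subalgebra k (H ⊗[k] H) :=
    (Algebra.TensorProduct.map (AlgHom.id k H) Z.val).range with hI
  have heq : (Algebra.TensorProduct.map (AlgHom.id k H) Z.val).toLinearMap
      = TensorProduct.map LinearMap.id Z.val.toLinearMap := by
    apply TensorProduct.ext'; intro a b; simp
  have hIlin : ∀ x : H ⊗[k] H, x ∈ I ↔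
      x ∈ LinearMap.range (TensorProduct.map (LinearMap.id : H →ₗ[k] H) Z.val.toLinearMap) := by
    intro x
    constructor
    · rintro ⟨t, rfl⟩
      exact ⟨t, (LinearMap.congr_fun heq t).symm ▸ rfl⟩
    · rintro ⟨t, rfl⟩
      exact ⟨t, LinearMap.congr_fun heq t⟩
  set L : Subalgebra k H := I.comap (Bialgebra.comulAlgHom k H) with hL
  have hmemL : ∀ y : H, y ∈ L ↔ Coalgebra.comul (R := k) y ∈
      LinearMap.range (TensorProduct.map (LinearMap.id : H →ₗ[k] H) Z.val.toLinearMap) := by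
    intro y
    rw [hL, Subalgebra.mem_comap, Bialgebra.comulAlgHom_apply, hIlin]
  have hsub : Z.val.toLinearMap = Z'.subtype := rfl
  refine ⟨L, ?_, ?_, ?_, ?_⟩
  · ext y
    simp only [SetLike.mem_coe, Set.mem_setOf_eq, hmemL]
  · -- left coideal property
    intro x hx
    set L' : Submodule k H := Subalgebra.toSubmodule L with hL'def
    have hval : L.val.toLinearMap = L'.subtype := rfl
    rw [hval, aux_mem_range_iff]
    set φ : H →ₗ[k] H ⊗[k] (H ⧸ Z') := (Z'.mkQ.lTensor H) ∘ₗ Coalgebra.comul with hφ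
    have hL'ker : L' = LinearMap.ker φ := by
      ext y
      rw [hL'def, Subalgebra.mem_toSubmodule, hmemL, hsub, aux_mem_range_iff,
        LinearMap.mem_ker, hφ, LinearMap.comp_apply]
    rw [hL'ker]
    -- the injective map `H ⧸ ker φ → H ⊗ (H ⧸ Z')`
    set ψ : (H ⧸ LinearMap.ker φ) →ₗ[k] H ⊗[k] (H ⧸ Z') :=
      (LinearMap.ker φ).liftQ φ le_rfl with hψdef
    have hψinj : Function.Injective ψ := by
      rw [← LinearMap.ker_eq_bot]
      exact Submodule.ker_liftQ_eq_bot _ _ _ le_rfl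
    have hψ : ψ ∘ₗ (LinearMap.ker φ).mkQ = φ := Submodule.liftQ_mkQ _ _ _
    have hinj2 : Function.Injective (ψ.lTensor H) :=
      Module.Flat.lTensor_preserves_injective_linearMap ψ hψinj
    apply hinj2
    rw [map_zero]
    have hcomp2 : (ψ.lTensor H) ∘ₗ ((LinearMap.ker φ).mkQ.lTensor H) = φ.lTensor H := by
      rw [← LinearMap.lTensor_comp, hψ]
    have hcomp := LinearMap.congr_fun hcomp2 (Coalgebra.comul (R := k) x)
    simp only [LinearMap.comp_apply] at hcomp
    rw [hcomp, hφ]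
    apply aux_key
    have hx' := (hmemL x).mp hx
    rw [hsub, aux_mem_range_iff] at hx'
    exact hx'
  · -- L ≤ Z
    intro y hy
    obtain ⟨t, ht⟩ := (hmemL y).mp hy
    have hy' : y = (TensorProduct.lid k H)
        ((TensorProduct.map (Coalgebra.counit (R := k) (A := H)) Z.val.toLinearMap) t) := by
      have hcomp : (Coalgebra.counit (R := k) (A := H)).rTensor H ∘ₗ
            TensorProduct.map LinearMap.id Z.val.toLinearMap
          = TensorProduct.map (Coalgebra.counit (R := k) (A := H)) Z.val.toLinearMap := by
        apply TensorProduct.ext'; intro a b; simp [LinearMap.rTensor_tmul]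
      have := LinearMap.congr_fun hcomp t
      simp only [LinearMap.comp_apply] at this
      rw [← this, ht, Coalgebra.rTensor_counit_comul, TensorProduct.lid_tmul, one_smul]
    rw [hy']
    have : ∀ s : H ⊗[k] ↥Z, (TensorProduct.lid k H)
        ((TensorProduct.map (Coalgebra.counit (R := k) (A := H)) Z.val.toLinearMap) s) ∈ Z := by
      intro s
      induction s using TensorProduct.induction_on with
      | zero => simp only [map_zero]; exact Z.zero_mem
      | tmul a z =>
        simp only [TensorProduct.map_tmul, TensorProduct.lid_tmul]
        exact Z.smul_mem z.2 _
      | add s₁ s₂ h₁ h₂ =>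
        simp only [map_add]
        exact Z.add_mem h₁ h₂
    exact this t
  · -- maximality
    intro N hN hNZ x hx
    obtain ⟨t, ht⟩ := hN x hx
    rw [hmemL]
    have hle : Subalgebra.toSubmodule N ≤ Z' := fun a ha => hNZ ha
    refine ⟨(Submodule.inclusion hle).lTensor H t, ?_⟩
    have h1 : TensorProduct.map (LinearMap.id : H →ₗ[k] H) Z.val.toLinearMap
        = Z'.subtype.lTensor H := rfl
    have h2 : TensorProduct.map (LinearMap.id : H →ₗ[k] H) N.val.toLinearMap
        = (Subalgebra.toSubmodule N).subtype.lTensor H := rfl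
    rw [h2] at ht
    have h3 : Z'.subtype ∘ₗ Submodule.inclusion hle = (Subalgebra.toSubmodule N).subtype := by
      ext a; rfl
    have h4 : Z'.subtype.lTensor H ∘ₗ (Submodule.inclusion hle).lTensor H
        = (Subalgebra.toSubmodule N).subtype.lTensor H := by
      rw [← LinearMap.lTensor_comp, h3]
    have h5 := LinearMap.congr_fun h4 t
    simp only [LinearMap.comp_apply] at h5
    rw [h1]
    exact h5.trans ht
end

section
/- Let G be a finite group. An element g ∈ G gives a central element of the group algebra ℂ[G] if and only if g ∈ Z(G). Consequently, {y ∈ ℂ[G] : Δ(y) ∈ ℂ[G] ⊗ Z(ℂ[G])} = ℂ[Z(G)], where Z(ℂ[G]) is the center of the algebra ℂ[G]. -/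
open TensorProduct

/-- The comultiplication of the group Hopf algebra `ℂ[G]`, determined by `Δ(g) = g ⊗ g`. -/
noncomputable def comulGA (G : Type*) [Group G] :
    MonoidAlgebra ℂ G →ₐ[ℂ] (MonoidAlgebra ℂ G ⊗[ℂ] MonoidAlgebra ℂ G) :=
  MonoidAlgebra.lift ℂ (MonoidAlgebra ℂ G ⊗[ℂ] MonoidAlgebra ℂ G) G
    { toFun := fun g => MonoidAlgebra.of ℂ G g ⊗ₜ[ℂ] MonoidAlgebra.of ℂ G g
      map_one' := by simp [Algebra.TensorProduct.one_def, MonoidAlgebra.one_def]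
      map_mul' := fun a b => by
        simp [Algebra.TensorProduct.tmul_mul_tmul] }

/-!
Applying the slice `x ⊗ z ↦ x_g • z` to `Δ y = ∑ₕ y_h • h ⊗ h` returns `y_g • g`, and it maps
`ℂ[G] ⊗ Z(ℂ[G])` into `Z(ℂ[G])`; so if `Δ y ∈ ℂ[G] ⊗ Z(ℂ[G])`, every `g` in the support of `y`
is central in `ℂ[G]`, hence in `G`. Conversely `Δ z = z ⊗ z` for `z ∈ Z(G)`.
-/

theorem TensorProduct.lid_rTensor_mem_range {R M P Q : Type*} [CommSemiring R]
    [AddCommMonoid M] [AddCommMonoid P] [AddCommMonoid Q] [Module R M] [Module R P] [Module R Q]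
    (φ : M →ₗ[R] R) (f : Q →ₗ[R] P) {x : M ⊗[R] P}
    (hx : x ∈ LinearMap.range (map LinearMap.id f)) :
    TensorProduct.lid R P (φ.rTensor P x) ∈ LinearMap.range f := by
  obtain ⟨t, rfl⟩ := hx
  refine ⟨TensorProduct.lid R Q (φ.rTensor Q t), ?_⟩
  induction t using TensorProduct.induction_on with
  | zero => simp
  | tmul m q => simp
  | add a b ha hb => simp only [map_add, ha, hb]

namespace MonoidAlgebra

theorem basis_repr {k G : Type*} [Semiring k] (x : MonoidAlgebra k G) :
    (basis G k).repr x = x.coeff :=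
  rfl

variable {k G : Type*} [CommSemiring k] [Group G]

theorem single_mem_center_iff {g : G} {c : k} (hc : c ≠ 0) :
    single g c ∈ Subalgebra.center k (MonoidAlgebra k G) ↔ g ∈ Subgroup.center G := by
  rw [Subalgebra.mem_center_iff, Subgroup.mem_center_iff]
  constructor
  · intro h x
    simpa [single_mul_single, single_left_inj hc] using h (single x 1)
  · intro h b
    induction b using induction_linear with
    | zero => simp
    | add x y hx hy => rw [add_mul, mul_add, hx, hy]
    | single x r => rw [single_mul_single, single_mul_single, h x, mul_comm]

theorem of_mem_center_iff [Nontrivial k] {g : G} :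
    of k G g ∈ Subalgebra.center k (MonoidAlgebra k G) ↔ g ∈ Subgroup.center G :=
  single_mem_center_iff one_ne_zero

theorem span_of_eq_supported (s : Set G) :
    Submodule.span k {x : MonoidAlgebra k G | ∃ z ∈ s, x = of k G z} = supported k k s := by
  rw [supported_eq_span_single]
  congr 1
  ext x
  simp [eq_comm]

end MonoidAlgebra

open MonoidAlgebra

theorem comulGA_of {G : Type*} [Group G] (g : G) :
    comulGA G (of ℂ G g) = of ℂ G g ⊗ₜ[ℂ] of ℂ G g := by
  simp [comulGA]

theorem lid_rTensor_coord_comulGA {G : Type*} [Group G] (g : G) (y : MonoidAlgebra ℂ G) :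
    TensorProduct.lid ℂ _ (((basis G ℂ).coord g).rTensor _ (comulGA G y)) =
      single g (y.coeff g) := by
  induction y using induction_on with
  | of h =>
    rw [comulGA_of]
    by_cases hgh : h = g
    · subst hgh; simp [basis_repr]
    · simp [basis_repr, hgh]
  | add x y hx hy => simp only [map_add, hx, hy, coeff_add, Finsupp.add_apply, single_add]
  | smul r x hx => simp only [map_smul, hx, coeff_smul, Finsupp.smul_apply, smul_single]

theorem mem_center_of_comulGA_mem_range {G : Type*} [Group G] {y : MonoidAlgebra ℂ G} {g : G}
    (hy : comulGA G y ∈ LinearMap.range (map LinearMap.id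
      (Subalgebra.center ℂ (MonoidAlgebra ℂ G)).val.toLinearMap))
    (hg : y.coeff g ≠ 0) : g ∈ Subgroup.center G := by
  obtain ⟨z, hz⟩ := lid_rTensor_mem_range ((basis G ℂ).coord g) _ hy
  rw [lid_rTensor_coord_comulGA] at hz
  exact (single_mem_center_iff hg).1 (hz ▸ z.2)

theorem supported_center_le_comap_comulGA (G : Type*) [Group G] :
    supported ℂ ℂ (Subgroup.center G : Set G) ≤
      (LinearMap.range (map LinearMap.id
        (Subalgebra.center ℂ (MonoidAlgebra ℂ G)).val.toLinearMap)).comap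
        (comulGA G).toLinearMap := by
  rw [supported_eq_span_single, Submodule.span_le]
  rintro _ ⟨z, hz, rfl⟩
  exact ⟨of ℂ G z ⊗ₜ ⟨of ℂ G z, of_mem_center_iff.2 hz⟩, (comulGA_of z).symm⟩

theorem comulGA_mem_range_iff {G : Type*} [Group G] {y : MonoidAlgebra ℂ G} :
    comulGA G y ∈ LinearMap.range (map LinearMap.id
      (Subalgebra.center ℂ (MonoidAlgebra ℂ G)).val.toLinearMap) ↔
      y ∈ supported ℂ ℂ (Subgroup.center G : Set G) := by
  refine ⟨fun hy => mem_supported'.2 fun g hg => ?_,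
    fun hy => supported_center_le_comap_comulGA G hy⟩
  by_contra hne
  exact hg (mem_center_of_comulGA_mem_range hy hne)

theorem stmt15_general (G : Type*) [Group G] :
    (∀ g : G, MonoidAlgebra.of ℂ G g ∈ Subalgebra.center ℂ (MonoidAlgebra ℂ G) ↔
      g ∈ Subgroup.center G) ∧
    {y : MonoidAlgebra ℂ G | comulGA G y ∈
        LinearMap.range (TensorProduct.map
          (LinearMap.id : MonoidAlgebra ℂ G →ₗ[ℂ] MonoidAlgebra ℂ G)
          (Subalgebra.center ℂ (MonoidAlgebra ℂ G)).val.toLinearMap)} =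
      ↑(Submodule.span ℂ {x : MonoidAlgebra ℂ G |
        ∃ z ∈ Subgroup.center G, x = MonoidAlgebra.of ℂ G z}) := by
  refine ⟨fun g => of_mem_center_iff, ?_⟩
  ext y
  exact comulGA_mem_range_iff.trans (SetLike.ext_iff.1 (span_of_eq_supported _) y).symm

/-- For a finite group `G`: a group element `g` gives a central element of `ℂ[G]` if and only
if `g ∈ Z(G)`; consequently `{y ∈ ℂ[G] : Δ(y) ∈ ℂ[G] ⊗ Z(ℂ[G])} = ℂ[Z(G)]`, the span of
the group elements lying in the center of `G`. -/
theorem stmt15 (G : Type*) [Group G] [Fintype G] :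
    (∀ g : G, MonoidAlgebra.of ℂ G g ∈ Subalgebra.center ℂ (MonoidAlgebra ℂ G) ↔
      g ∈ Subgroup.center G) ∧
    {y : MonoidAlgebra ℂ G | comulGA G y ∈
        LinearMap.range (TensorProduct.map
          (LinearMap.id : MonoidAlgebra ℂ G →ₗ[ℂ] MonoidAlgebra ℂ G)
          (Subalgebra.center ℂ (MonoidAlgebra ℂ G)).val.toLinearMap)} =
      ↑(Submodule.span ℂ {x : MonoidAlgebra ℂ G |
        ∃ z ∈ Subgroup.center G, x = MonoidAlgebra.of ℂ G z}) :=
  stmt15_general G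
end
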